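/- arXiv:2301.07306 — 9 statements merged into one kernel-verified Lean document; each statement's English description precedes it below -/
import Mathlib

section
/- Suppose η ≤ 1 − 1/c and there are constants C_L ≤ C_U such that C_L ≤ Σ_{j=1}^c ℓ(g(z), j) ≤ C_U for every classifier g ∈ F and every z ∈ Z. If f* ∈ F is a global minimizer of R over F (R(f*) ≤ R(g) for all g ∈ F) and f̂ ∈ F is a global minimizer of R^η over F (R^η(f̂) ≤ R^η(g) for all g ∈ F), then 0 ≤ R^η(f*) − R^η(f̂) ≤ η(C_U − C_L)/(c−1). -/
open MeasureTheory

/-- The clean risk `R(f) = ∫ ℓ(f(z), Y(z)) dμ(z)`. -/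
noncomputable def cleanRisk {Z : Type*} [MeasurableSpace Z] (μ : Measure Z) {c : ℕ}
    (Y : Z → Fin c) (ℓ : (Fin c → ℝ) → Fin c → ℝ) (f : Z → Fin c → ℝ) : ℝ :=
  ∫ z, ℓ (f z) (Y z) ∂μ

/-- The noisy risk under symmetric label noise with rate `η`:
`R^η(f) = ∫ [(1-η) ℓ(f(z), Y(z)) + (η/(c-1)) Σ_{j ≠ Y(z)} ℓ(f(z), j)] dμ(z)`. -/
noncomputable def noisyRisk {Z : Type*} [MeasurableSpace Z] (μ : Measure Z) {c : ℕ}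
    (Y : Z → Fin c) (ℓ : (Fin c → ℝ) → Fin c → ℝ) (η : ℝ) (f : Z → Fin c → ℝ) : ℝ :=
  ∫ z, ((1 - η) * ℓ (f z) (Y z)
      + (η / ((c : ℝ) - 1)) * ∑ j ∈ Finset.univ.erase (Y z), ℓ (f z) j) ∂μ

/-- If `η ≤ 1 − 1/c`, the class-sums of the loss lie in `[C_L, C_U]` over `F`,
`f*` minimizes the clean risk over `F`, and `f̂` minimizes the noisy risk over `F`, then
`0 ≤ R^η(f*) − R^η(f̂) ≤ η(C_U − C_L)/(c−1)`. -/
theorem noisy_excess_risk_bound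
    {Z : Type*} [MeasurableSpace Z] (μ : Measure Z) [IsProbabilityMeasure μ]
    (c : ℕ) (hc : 2 ≤ c) (Y : Z → Fin c)
    (ℓ : (Fin c → ℝ) → Fin c → ℝ) (hℓ : ∀ v j, 0 ≤ ℓ v j)
    (F : Set (Z → Fin c → ℝ))
    (hint : ∀ g ∈ F, Integrable (fun z => ℓ (g z) (Y z)) μ
      ∧ Integrable (fun z => ∑ j, ℓ (g z) j) μ)
    (η : ℝ) (hη0 : 0 ≤ η) (hη : η ≤ 1 - 1 / (c : ℝ))
    (CL CU : ℝ) (hC : CL ≤ CU)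
    (hbound : ∀ g ∈ F, ∀ z : Z, CL ≤ ∑ j, ℓ (g z) j ∧ ∑ j, ℓ (g z) j ≤ CU)
    (fstar : Z → Fin c → ℝ) (hfstarF : fstar ∈ F)
    (hfstar : ∀ g ∈ F, cleanRisk μ Y ℓ fstar ≤ cleanRisk μ Y ℓ g)
    (fhat : Z → Fin c → ℝ) (hfhatF : fhat ∈ F)
    (hfhat : ∀ g ∈ F, noisyRisk μ Y ℓ η fhat ≤ noisyRisk μ Y ℓ η g) :
    0 ≤ noisyRisk μ Y ℓ η fstar - noisyRisk μ Y ℓ η fhat ∧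
    noisyRisk μ Y ℓ η fstar - noisyRisk μ Y ℓ η fhat
      ≤ η * (CU - CL) / ((c : ℝ) - 1) := by

  set κ := η / ((c : ℝ) - 1) with hκdef
  have hc1 : (1 : ℝ) ≤ (c : ℝ) - 1 := by
    have : (2 : ℝ) ≤ (c : ℝ) := by exact_mod_cast hc
    linarith
  have hc1pos : (0 : ℝ) < (c : ℝ) - 1 := by linarith
  have hκ0 : 0 ≤ κ := div_nonneg hη0 (le_of_lt hc1pos)
  have hcoef : 0 ≤ 1 - η - κ := by
    have hcpos : (0 : ℝ) < (c : ℝ) := by linarith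
    have h1 : η * (c : ℝ) ≤ (c : ℝ) - 1 := by
      have := mul_le_mul_of_nonneg_right hη (le_of_lt hcpos)
      calc η * (c:ℝ) ≤ (1 - 1/(c:ℝ)) * (c:ℝ) := this
        _ = (c:ℝ) - 1 := by field_simp
    have : κ ≤ 1 - η := by
      rw [hκdef, div_le_iff₀ hc1pos]
      nlinarith
    linarith
  -- expansion of noisy risk
  have expand : ∀ g ∈ F, noisyRisk μ Y ℓ η g
      = (1 - η - κ) * cleanRisk μ Y ℓ g + κ * ∫ z, ∑ j, ℓ (g z) j ∂μ := by
    intro g hg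
    obtain ⟨h1, h2⟩ := hint g hg
    have key : (fun z => ((1 - η) * ℓ (g z) (Y z)
        + (η / ((c : ℝ) - 1)) * ∑ j ∈ Finset.univ.erase (Y z), ℓ (g z) j))
        = fun z => (1 - η - κ) * ℓ (g z) (Y z) + κ * ∑ j, ℓ (g z) j := by
      funext z
      have he : ∑ j ∈ Finset.univ.erase (Y z), ℓ (g z) j
          = (∑ j, ℓ (g z) j) - ℓ (g z) (Y z) :=
        Finset.sum_erase_eq_sub (Finset.mem_univ _)
      rw [he, hκdef]; ring
    rw [noisyRisk, key, integral_add (h1.const_mul _) (h2.const_mul _),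
      integral_const_mul, integral_const_mul, cleanRisk]
  have hint1 := hint fstar hfstarF
  have hint2 := hint fhat hfhatF
  -- bounds on integrals of sums
  have hSub : ∀ g ∈ F, ∫ z, ∑ j, ℓ (g z) j ∂μ ≤ CU := by
    intro g hg
    have : ∫ z, ∑ j, ℓ (g z) j ∂μ ≤ ∫ _, CU ∂μ := by
      apply integral_mono (hint g hg).2 (integrable_const _)
      intro z; exact (hbound g hg z).2
    simpa using this
  have hSlb : ∀ g ∈ F, CL ≤ ∫ z, ∑ j, ℓ (g z) j ∂μ := by
    intro g hg
    have : ∫ _, CL ∂μ ≤ ∫ z, ∑ j, ℓ (g z) j ∂μ := by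
      apply integral_mono (integrable_const _) (hint g hg).2
      intro z; exact (hbound g hg z).1
    simpa using this
  constructor
  · linarith [hfhat fstar hfstarF]
  · have e1 := expand fstar hfstarF
    have e2 := expand fhat hfhatF
    have hclean := hfstar fhat hfhatF
    have h3 := hSub fstar hfstarF
    have h4 := hSlb fhat hfhatF
    have hterm1 : (1 - η - κ) * cleanRisk μ Y ℓ fstar
        ≤ (1 - η - κ) * cleanRisk μ Y ℓ fhat :=
      mul_le_mul_of_nonneg_left hclean hcoef
    have hterm2 : κ * ∫ z, ∑ j, ℓ (fstar z) j ∂μ - κ * ∫ z, ∑ j, ℓ (fhat z) j ∂μ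
        ≤ κ * (CU - CL) := by nlinarith
    have : noisyRisk μ Y ℓ η fstar - noisyRisk μ Y ℓ η fhat ≤ κ * (CU - CL) := by
      rw [e1, e2]; linarith
    calc noisyRisk μ Y ℓ η fstar - noisyRisk μ Y ℓ η fhat ≤ κ * (CU - CL) := this
      _ = η * (CU - CL) / ((c : ℝ) - 1) := by rw [hκdef]; ring
end

section
/- Suppose η < 1 − 1/c and there are constants C_L ≤ C_U such that C_L ≤ Σ_{j=1}^c ℓ(g(z), j) ≤ C_U for every classifier g ∈ F and every z ∈ Z. If f* ∈ F is a global minimizer of R over F and f̂ ∈ F is a global minimizer of R^η over F, then −η(C_U − C_L)/(c − 1 − ηc) ≤ R(f*) − R(f̂) ≤ 0. -/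
open MeasureTheory

/-- If `η < 1 − 1/c`, the class-sums of the loss lie in `[C_L, C_U]` over `F`,
`f*` minimizes the clean risk over `F`, and `f̂` minimizes the noisy risk over `F`, then
`−η(C_U − C_L)/(c − 1 − ηc) ≤ R(f*) − R(f̂) ≤ 0`. -/
theorem clean_excess_risk_bound
    {Z : Type*} [MeasurableSpace Z] (μ : Measure Z) [IsProbabilityMeasure μ]
    (c : ℕ) (hc : 2 ≤ c) (Y : Z → Fin c)
    (ℓ : (Fin c → ℝ) → Fin c → ℝ) (hℓ : ∀ v j, 0 ≤ ℓ v j)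
    (F : Set (Z → Fin c → ℝ))
    (hint : ∀ g ∈ F, Integrable (fun z => ℓ (g z) (Y z)) μ
      ∧ Integrable (fun z => ∑ j, ℓ (g z) j) μ)
    (η : ℝ) (hη0 : 0 ≤ η) (hη : η < 1 - 1 / (c : ℝ))
    (CL CU : ℝ) (hC : CL ≤ CU)
    (hbound : ∀ g ∈ F, ∀ z : Z, CL ≤ ∑ j, ℓ (g z) j ∧ ∑ j, ℓ (g z) j ≤ CU)
    (fstar : Z → Fin c → ℝ) (hfstarF : fstar ∈ F)
    (hfstar : ∀ g ∈ F, cleanRisk μ Y ℓ fstar ≤ cleanRisk μ Y ℓ g)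
    (fhat : Z → Fin c → ℝ) (hfhatF : fhat ∈ F)
    (hfhat : ∀ g ∈ F, noisyRisk μ Y ℓ η fhat ≤ noisyRisk μ Y ℓ η g) :
    -(η * (CU - CL)) / ((c : ℝ) - 1 - η * (c : ℝ))
        ≤ cleanRisk μ Y ℓ fstar - cleanRisk μ Y ℓ fhat ∧
    cleanRisk μ Y ℓ fstar - cleanRisk μ Y ℓ fhat ≤ 0 := by
  have hc1 : (1:ℝ) < (c:ℝ) := by exact_mod_cast Nat.lt_of_lt_of_le one_lt_two hc
  have hcpos : (0:ℝ) < (c:ℝ) - 1 := by linarith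
  have hden : 0 < (c:ℝ) - 1 - η * c := by
    have h1 := mul_lt_mul_of_pos_right hη (by linarith : (0:ℝ) < c)
    have h2 : (1 - 1 / (c:ℝ)) * c = c - 1 := by field_simp
    linarith
  set b := η / ((c:ℝ) - 1) with hb
  have hbnn : 0 ≤ b := div_nonneg hη0 hcpos.le
  set a := 1 - η * c / ((c:ℝ) - 1) with ha
  have ha_eq : a * ((c:ℝ) - 1) = (c:ℝ) - 1 - η * c := by
    rw [ha]; field_simp
  have hb_eq : b * ((c:ℝ) - 1) = η := by
    rw [hb]; field_simp
  have key : ∀ g ∈ F, noisyRisk μ Y ℓ η g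
      = a * cleanRisk μ Y ℓ g + b * ∫ z, ∑ j, ℓ (g z) j ∂μ := by
    intro g hg
    obtain ⟨h1, h2⟩ := hint g hg
    have hpt : ∀ z, ((1 - η) * ℓ (g z) (Y z)
        + (η / ((c : ℝ) - 1)) * ∑ j ∈ Finset.univ.erase (Y z), ℓ (g z) j)
        = a * ℓ (g z) (Y z) + b * ∑ j, ℓ (g z) j := by
      intro z
      have he : ∑ j ∈ Finset.univ.erase (Y z), ℓ (g z) j
          = (∑ j, ℓ (g z) j) - ℓ (g z) (Y z) := by
        rw [Finset.sum_erase_eq_sub (Finset.mem_univ _)]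
      rw [he, ha, hb]
      field_simp
      ring
    unfold noisyRisk cleanRisk
    simp_rw [hpt]
    rw [integral_add (h1.const_mul a) (h2.const_mul b),
        integral_const_mul, integral_const_mul]
  have Sb : ∀ g ∈ F, CL ≤ (∫ z, ∑ j, ℓ (g z) j ∂μ) ∧ (∫ z, ∑ j, ℓ (g z) j ∂μ) ≤ CU := by
    intro g hg
    obtain ⟨_, h2⟩ := hint g hg
    constructor
    · calc CL = ∫ _ : Z, CL ∂μ := by simp
        _ ≤ _ := integral_mono (integrable_const _) h2 (fun z => (hbound g hg z).1)
    · calc (∫ z, ∑ j, ℓ (g z) j ∂μ) ≤ ∫ _ : Z, CU ∂μ :=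
          integral_mono h2 (integrable_const _) (fun z => (hbound g hg z).2)
        _ = CU := by simp
  have hupper : cleanRisk μ Y ℓ fstar - cleanRisk μ Y ℓ fhat ≤ 0 :=
    sub_nonpos.mpr (hfstar fhat hfhatF)
  have hnoisy := hfhat fstar hfstarF
  rw [key fhat hfhatF, key fstar hfstarF] at hnoisy
  obtain ⟨hS1, hS2⟩ := Sb fstar hfstarF
  obtain ⟨hS3, hS4⟩ := Sb fhat hfhatF
  refine ⟨?_, hupper⟩
  rw [div_le_iff₀ hden]
  have h6 : a * (cleanRisk μ Y ℓ fhat - cleanRisk μ Y ℓ fstar) ≤ b * (CU - CL) := by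
    nlinarith
  nlinarith [mul_le_mul_of_nonneg_left h6 hcpos.le]
end

section
/- Suppose the loss ℓ is symmetric on the predictions used by F, i.e., there is a constant C with Σ_{j=1}^c ℓ(g(z), j) = C for every g ∈ F and every z ∈ Z, and suppose 0 ≤ η < 1 − 1/c. Then a classifier f ∈ F is a global minimizer of the clean risk R over F if and only if it is a global minimizer of the noisy risk R^η over F; in particular a symmetric loss is noise-tolerant under symmetric label noise with η < (c−1)/c. -/
open MeasureTheory

/-! Since the losses of a prediction over all labels sum to `C`, the noisy risk of `g ∈ F` is
`(1 - η c/(c-1)) R(g) + η C/(c-1)`, an increasing affine function of the clean risk exactly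
when `η < 1 - 1/c`; such a function has the same minimizers. -/

lemma one_sub_sub_div_sub_one_pos {c η : ℝ} (hc : 1 < c) (hη : η < 1 - 1 / c) :
    0 < 1 - η - η / (c - 1) := by
  have hc0 : 0 < c - 1 := sub_pos.mpr hc
  have hηc : η * c < c - 1 := by
    have := mul_lt_mul_of_pos_right hη (by linarith : (0 : ℝ) < c)
    rwa [sub_mul, one_div_mul_cancel (by linarith), one_mul] at this
  have : η + η / (c - 1) < 1 := by
    rw [← lt_sub_iff_add_lt', div_lt_iff₀ hc0]
    linarith
  linarith

lemma noisyRisk_eq_of_sum_eq {Z : Type*} [MeasurableSpace Z] (μ : Measure Z)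
    [IsProbabilityMeasure μ] {c : ℕ} (Y : Z → Fin c) (ℓ : (Fin c → ℝ) → Fin c → ℝ) (η : ℝ)
    {g : Z → Fin c → ℝ} {C : ℝ} (hint : Integrable (fun z => ℓ (g z) (Y z)) μ)
    (hsym : ∀ z, ∑ j, ℓ (g z) j = C) :
    noisyRisk μ Y ℓ η g = (1 - η - η / ((c : ℝ) - 1)) * cleanRisk μ Y ℓ g
      + η * C / ((c : ℝ) - 1) := by
  have hpointwise : ∀ z, (1 - η) * ℓ (g z) (Y z)
      + (η / ((c : ℝ) - 1)) * ∑ j ∈ Finset.univ.erase (Y z), ℓ (g z) j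
      = (1 - η - η / ((c : ℝ) - 1)) * ℓ (g z) (Y z) + η * C / ((c : ℝ) - 1) := by
    intro z
    rw [Finset.sum_erase_eq_sub (Finset.mem_univ _), hsym z]
    ring
  simp only [noisyRisk, cleanRisk, hpointwise]
  rw [integral_add (hint.const_mul _) (integrable_const _), integral_const_mul,
    integral_const, probReal_univ, one_smul]

lemma forall_le_iff_forall_le_of_eq_mul_add {α R : Type*} [Semiring R] [LinearOrder R]
    [IsStrictOrderedRing R] {F : Set α} {φ ψ : α → R} {a b : R} (ha : 0 < a)
    (h : ∀ g ∈ F, φ g = a * ψ g + b) {f : α} (hf : f ∈ F) :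
    (∀ g ∈ F, ψ f ≤ ψ g) ↔ (∀ g ∈ F, φ f ≤ φ g) :=
  forall₂_congr fun g hg => by
    rw [h f hf, h g hg, add_le_add_iff_right, mul_le_mul_iff_of_pos_left ha]

theorem symmetric_loss_noise_tolerant_general
    {Z : Type*} [MeasurableSpace Z] (μ : Measure Z) [IsProbabilityMeasure μ]
    (c : ℕ) (hc : 2 ≤ c) (Y : Z → Fin c)
    (ℓ : (Fin c → ℝ) → Fin c → ℝ)
    (F : Set (Z → Fin c → ℝ))
    (hint : ∀ g ∈ F, Integrable (fun z => ℓ (g z) (Y z)) μ)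
    (C : ℝ) (hsym : ∀ g ∈ F, ∀ z : Z, ∑ j, ℓ (g z) j = C)
    (η : ℝ) (hη : η < 1 - 1 / (c : ℝ)) :
    ∀ f ∈ F,
      ((∀ g ∈ F, cleanRisk μ Y ℓ f ≤ cleanRisk μ Y ℓ g) ↔
        (∀ g ∈ F, noisyRisk μ Y ℓ η f ≤ noisyRisk μ Y ℓ η g)) := by
  intro f hf
  have hc1 : (1 : ℝ) < c := by exact_mod_cast hc
  exact forall_le_iff_forall_le_of_eq_mul_add (one_sub_sub_div_sub_one_pos hc1 hη)
    (fun g hg => noisyRisk_eq_of_sum_eq μ Y ℓ η (hint g hg) (hsym g hg)) hf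

/-- If the loss is symmetric on the predictions used by `F`
(`Σ_j ℓ(g(z), j) = C` for all `g ∈ F`, `z ∈ Z`) and `0 ≤ η < 1 − 1/c`, then `f ∈ F`
minimizes the clean risk over `F` iff it minimizes the noisy risk over `F`
(noise tolerance of symmetric losses under symmetric label noise). -/
theorem symmetric_loss_noise_tolerant
    {Z : Type*} [MeasurableSpace Z] (μ : Measure Z) [IsProbabilityMeasure μ]
    (c : ℕ) (hc : 2 ≤ c) (Y : Z → Fin c)
    (ℓ : (Fin c → ℝ) → Fin c → ℝ) (hℓ : ∀ v j, 0 ≤ ℓ v j)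
    (F : Set (Z → Fin c → ℝ))
    (hint : ∀ g ∈ F, Integrable (fun z => ℓ (g z) (Y z)) μ)
    (C : ℝ) (hsym : ∀ g ∈ F, ∀ z : Z, ∑ j, ℓ (g z) j = C)
    (η : ℝ) (hη0 : 0 ≤ η) (hη : η < 1 - 1 / (c : ℝ)) :
    ∀ f ∈ F,
      ((∀ g ∈ F, cleanRisk μ Y ℓ f ≤ cleanRisk μ Y ℓ g) ↔
        (∀ g ∈ F, noisyRisk μ Y ℓ η f ≤ noisyRisk μ Y ℓ η g)) :=
  symmetric_loss_noise_tolerant_general μ c hc Y ℓ F hint C hsym η hη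
end

section
/- For every q ∈ (0, 1] and every p ∈ Δ, the sum of the GCE losses over all class labels satisfies (c − c^{1−q})/q ≤ Σ_{j=1}^c (1 − p_j^q)/q ≤ (c − 1)/q (so the GCE loss is bounded with C_L = (c − c^{1−q})/q and C_U = (c−1)/q). -/
/-- For every `q ∈ (0,1]` and every `p` in the probability simplex `Δ ⊂ ℝ^c`,
the sum of the GCE losses `(1 − p_j^q)/q` over all class labels `j` satisfies
`(c − c^{1−q})/q ≤ Σ_j (1 − p_j^q)/q ≤ (c − 1)/q`
(here `p_j ^ q` is the real power, with the convention `0 ^ q = 0` for `q > 0`). -/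
theorem gce_bounded (c : ℕ) (hc : 2 ≤ c) (q : ℝ) (hq0 : 0 < q) (hq1 : q ≤ 1)
    (p : Fin c → ℝ) (hp0 : ∀ i, 0 ≤ p i) (hp1 : ∑ i, p i = 1) :
    ((c : ℝ) - (c : ℝ) ^ (1 - q)) / q ≤ ∑ j, (1 - p j ^ q) / q ∧
      ∑ j, (1 - p j ^ q) / q ≤ ((c : ℝ) - 1) / q := by
  have hcpos : (0:ℝ) < c := by positivity
  have hsum : ∀ j, (1 - p j ^ q) / q = (1/q) * (1 - p j ^ q) := by
    intro j; ring
  have key : ∑ j, (1 - p j ^ q) / q = (1/q) * ((c:ℝ) - ∑ j, p j ^ q) := by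
    simp_rw [hsum, ← Finset.mul_sum, Finset.sum_sub_distrib, Finset.sum_const,
      Finset.card_univ, Fintype.card_fin, nsmul_eq_mul, mul_one]
  -- lower bound on sum of rpow: each p j ≤ 1 so p j ≤ p j ^ q
  have hle1 : ∀ j, p j ≤ 1 := by
    intro j
    calc p j ≤ ∑ i, p i := Finset.single_le_sum (fun i _ => hp0 i) (Finset.mem_univ j)
    _ = 1 := hp1
  have h1 : (1:ℝ) ≤ ∑ j, p j ^ q := by
    rw [← hp1]
    apply Finset.sum_le_sum
    intro i _
    rcases eq_or_lt_of_le (hp0 i) with h | h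
    · rw [← h, Real.zero_rpow hq0.ne']
    · calc p i = p i ^ (1:ℝ) := (Real.rpow_one _).symm
      _ ≤ p i ^ q := Real.rpow_le_rpow_of_exponent_ge h (hle1 i) hq1
  -- upper bound via power mean inequality
  have h2 : ∑ j, p j ^ q ≤ (c:ℝ) ^ (1 - q) := by
    have hw : ∀ i ∈ (Finset.univ : Finset (Fin c)), (0:ℝ) ≤ (1:ℝ)/c := fun _ _ => by positivity
    have hw' : ∑ _i : Fin c, (1:ℝ)/c = 1 := by
      rw [Finset.sum_const, Finset.card_univ, Fintype.card_fin, nsmul_eq_mul]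
      field_simp
    have hz : ∀ i ∈ (Finset.univ : Finset (Fin c)), (0:ℝ) ≤ p i ^ q := fun i _ => Real.rpow_nonneg (hp0 i) q
    have hp : (1:ℝ) ≤ 1/q := by
      rw [le_div_iff₀ hq0]; linarith
    have := Real.arith_mean_le_rpow_mean Finset.univ (fun _ => (1:ℝ)/c)
      (fun i => p i ^ q) hw hw' hz hp
    have hz' : ∀ i, (p i ^ q) ^ ((1:ℝ)/q) = p i := by
      intro i
      rw [← Real.rpow_mul (hp0 i), mul_one_div, div_self hq0.ne', Real.rpow_one]
    have this2 : ∑ i, (1/(c:ℝ)) * p i ^ q ≤ ((1:ℝ)/c) ^ q := by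
      calc ∑ i, (1/(c:ℝ)) * p i ^ q
          ≤ (∑ i, (1/(c:ℝ)) * (p i ^ q) ^ ((1:ℝ)/q)) ^ (1/((1:ℝ)/q)) := this
        _ = ((1:ℝ)/c) ^ q := by
            simp_rw [hz', ← Finset.mul_sum, hp1, mul_one, one_div_one_div]
    have this3 := mul_le_mul_of_nonneg_left this2 hcpos.le
    rw [Finset.mul_sum] at this3
    calc ∑ j, p j ^ q = ∑ j, (c:ℝ) * ((1/(c:ℝ)) * p j ^ q) := by
          apply Finset.sum_congr rfl; intro j _; field_simp
      _ ≤ (c:ℝ) * ((1:ℝ)/c) ^ q := this3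
      _ = (c:ℝ) ^ (1 - q) := by
          rw [Real.rpow_sub hcpos, Real.rpow_one, one_div, Real.inv_rpow hcpos.le,
            div_eq_mul_inv]
  rw [key]
  constructor
  · rw [div_eq_mul_one_div, mul_comm]
    apply mul_le_mul_of_nonneg_left _ (by positivity)
    linarith
  · rw [div_eq_mul_one_div ((c:ℝ) - 1), mul_comm ((c:ℝ)-1)]
    apply mul_le_mul_of_nonneg_left _ (by positivity)
    linarith
end

section
/- Fix π1 ∈ (0,1). For every p ∈ Δ, the sum of the JS losses over all class labels satisfies Σ_{i=1}^c L_JS(u, e_i; π1) ≤ Σ_{i=1}^c L_JS(p, e_i; π1) ≤ Σ_{i=1}^c L_JS(e_1, e_i; π1), where u = (1/c, …, 1/c) is the uniform distribution; i.e., the JS loss is bounded with C_L = Σ_{i=1}^c L_JS(u, e_i; π1) and C_U = Σ_{i=1}^c L_JS(e_1, e_i; π1). -/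
/-!
Against a one-hot label both divergences in the JS loss collapse to expressions in the single
coordinate `t = p j`: with `φ(t) = π₂ t log t - (π₁ + π₂ t) log (π₁ + π₂ t)` one gets
`L_JS(p, e_j) = (φ(t) - π₂ (1 - t) log π₂) / Z`, so `Σ_j L_JS(p, e_j) = (Σ_j φ(p j) - C) / Z`
with `C` independent of `p` and `Z ≥ 0`. The function `φ` is convex on `[0, ∞)`, its derivative
`π₂ log (t / (π₁ + π₂ t))` being increasing. Jensen's inequality puts the minimum of `Σ_j φ(p j)`
over the simplex at the uniform distribution, and bounding `φ` by its chord on `[0, 1]` shows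
that the maximum is attained at any vertex.
-/

/-- Discrete Kullback–Leibler divergence `D(a ‖ b) = Σ_k a_k·log(a_k/b_k)`
(with the convention `0·log 0 = 0`, automatic since multiplication by `0`). -/
noncomputable def klDiv {c : ℕ} (a b : Fin c → ℝ) : ℝ :=
  ∑ k, a k * Real.log (a k / b k)

/-- The `j`-th standard one-hot vector `e_j`. -/
def oneHot {c : ℕ} (j : Fin c) : Fin c → ℝ :=
  fun k => if k = j then 1 else 0

/-- The JS loss of a prediction `p` in the simplex against the one-hot label `e_j`,
with hyperparameters `π1 ∈ (0,1)` and `π2 = 1 − π1`: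
`L_JS(p, e_j; π1) = (π1·D(e_j ‖ m) + π2·D(p ‖ m))/Z` where `m = π1·e_j + π2·p` and
`Z = −(1 − π1)·log(1 − π1)`. -/
noncomputable def jsLoss {c : ℕ} (p : Fin c → ℝ) (j : Fin c) (π1 : ℝ) : ℝ :=
  (π1 * klDiv (oneHot j) (fun k => π1 * oneHot j k + (1 - π1) * p k)
      + (1 - π1) * klDiv p (fun k => π1 * oneHot j k + (1 - π1) * p k))
    / (-(1 - π1) * Real.log (1 - π1))

open Real Finset

noncomputable def jsPhi (π1 t : ℝ) : ℝ :=
  (1 - π1) * (t * log t) - (π1 + (1 - π1) * t) * log (π1 + (1 - π1) * t)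

section Convexity

variable {π1 : ℝ}

lemma hasDerivAt_jsPhi (h0 : 0 < π1) (h1 : π1 ≤ 1) {t : ℝ} (ht : 0 < t) :
    HasDerivAt (jsPhi π1) ((1 - π1) * (log t - log (π1 + (1 - π1) * t))) t := by
  have hm : 0 < π1 + (1 - π1) * t := by nlinarith
  have hlin : HasDerivAt (fun s : ℝ => π1 + (1 - π1) * s) (1 - π1) t := by
    simpa using ((hasDerivAt_id t).const_mul (1 - π1)).const_add π1
  refine (((hasDerivAt_mul_log ht.ne').const_mul (1 - π1)).sub
    ((hasDerivAt_mul_log hm.ne').comp t hlin)).congr_deriv ?_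
  ring

lemma jsPhi_convexOn (h0 : 0 < π1) (h1 : π1 ≤ 1) : ConvexOn ℝ (Set.Ici 0) (jsPhi π1) := by
  refine MonotoneOn.convexOn_of_deriv (convex_Ici 0) ?_ ?_ ?_
  · exact ((continuous_const.mul continuous_mul_log).sub
      (continuous_mul_log.comp (by fun_prop))).continuousOn
  · rw [interior_Ici]
    exact fun t ht => (hasDerivAt_jsPhi h0 h1 ht).differentiableAt.differentiableWithinAt
  · rw [interior_Ici]
    intro s (hs : 0 < s) t (ht : 0 < t) hst
    have hms : 0 < π1 + (1 - π1) * s := by nlinarith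
    have hmt : 0 < π1 + (1 - π1) * t := by nlinarith
    rw [(hasDerivAt_jsPhi h0 h1 hs).deriv, (hasDerivAt_jsPhi h0 h1 ht).deriv,
      ← log_div hs.ne' hms.ne', ← log_div ht.ne' hmt.ne']
    have hratio : s / (π1 + (1 - π1) * s) ≤ t / (π1 + (1 - π1) * t) := by
      rw [div_le_div_iff₀ hms hmt]
      nlinarith
    gcongr

end Convexity

section Simplex

variable {ι : Type*} [Fintype ι] {f : ℝ → ℝ} {p : ι → ℝ}

lemma ConvexOn.sum_const_inv_card_le_sum (hf : ConvexOn ℝ (Set.Icc 0 1) f)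
    (hp : p ∈ stdSimplex ℝ ι) :
    ∑ _i : ι, f (Fintype.card ι : ℝ)⁻¹ ≤ ∑ i, f (p i) := by
  have : Nonempty ι := by
    by_contra h
    simpa [not_nonempty_iff.mp h] using hp.2
  have hcard : (0 : ℝ) < Fintype.card ι := by exact_mod_cast Fintype.card_pos
  have hjensen := hf.map_sum_le (t := univ) (w := fun _ => (Fintype.card ι : ℝ)⁻¹)
    (fun _ _ => by positivity) (by simp [hcard.ne'])
    (fun i _ => mem_Icc_of_mem_stdSimplex hp i)
  simp only [smul_eq_mul, ← mul_sum, hp.2, mul_one] at hjensen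
  rw [sum_const, card_univ, nsmul_eq_mul]
  calc (Fintype.card ι : ℝ) * f (Fintype.card ι : ℝ)⁻¹
      ≤ (Fintype.card ι : ℝ) * ((Fintype.card ι : ℝ)⁻¹ * ∑ i, f (p i)) := by gcongr
    _ = ∑ i, f (p i) := by field_simp

lemma ConvexOn.le_chord_unitInterval (hf : ConvexOn ℝ (Set.Icc 0 1) f) {t : ℝ}
    (ht : t ∈ Set.Icc (0 : ℝ) 1) : f t ≤ (1 - t) * f 0 + t * f 1 := by
  simpa using hf.2 (Set.left_mem_Icc.mpr zero_le_one) (Set.right_mem_Icc.mpr zero_le_one)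
    (sub_nonneg.mpr ht.2) ht.1 (sub_add_cancel 1 t)

lemma sum_chord_of_mem_stdSimplex (a b : ℝ) (hp : p ∈ stdSimplex ℝ ι) :
    ∑ i, ((1 - p i) * a + p i * b) = (Fintype.card ι - 1) * a + b := by
  simp only [sum_add_distrib, ← sum_mul, sum_sub_distrib, hp.2, sum_const, card_univ,
    nsmul_eq_mul, mul_one, one_mul]

lemma ConvexOn.sum_le_sum_single [DecidableEq ι] (hf : ConvexOn ℝ (Set.Icc 0 1) f)
    (hp : p ∈ stdSimplex ℝ ι) (j : ι) :
    ∑ i, f (p i) ≤ ∑ i, f ((Pi.single j 1 : ι → ℝ) i) := by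
  have hvertex : ∀ i, f ((Pi.single j 1 : ι → ℝ) i)
      = (1 - (Pi.single j 1 : ι → ℝ) i) * f 0 + (Pi.single j 1 : ι → ℝ) i * f 1 := by
    intro i
    rcases eq_or_ne i j with rfl | hij <;> simp [*]
  calc ∑ i, f (p i) ≤ ∑ i, ((1 - p i) * f 0 + p i * f 1) :=
        sum_le_sum fun i _ => hf.le_chord_unitInterval (mem_Icc_of_mem_stdSimplex hp i)
    _ = ∑ i, f ((Pi.single j 1 : ι → ℝ) i) := by
        rw [sum_congr rfl fun i _ => hvertex i, sum_chord_of_mem_stdSimplex _ _ hp,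
          sum_chord_of_mem_stdSimplex _ _ (single_mem_stdSimplex ℝ j)]

end Simplex

section JSLoss

variable {c : ℕ} {π1 : ℝ}

lemma oneHot_eq_single (j : Fin c) : oneHot j = Pi.single j 1 := by
  ext k
  simp [oneHot, Pi.single_apply]

lemma oneHot_self (j : Fin c) : oneHot j j = 1 := if_pos rfl

lemma oneHot_of_ne {j k : Fin c} (h : k ≠ j) : oneHot j k = 0 := if_neg h

lemma klDiv_oneHot_left (j : Fin c) (b : Fin c → ℝ) : klDiv (oneHot j) b = -log (b j) := by
  rw [klDiv, Fintype.sum_eq_single j fun k hk => by simp [oneHot, hk]]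
  simp [oneHot]

lemma mul_log_div_mul_self (x a : ℝ) : x * log (x / (a * x)) = -(x * log a) := by
  rcases eq_or_ne x 0 with rfl | hx
  · simp
  · rw [div_mul_cancel_right₀ hx, log_inv, mul_neg]

lemma klDiv_mix_oneHot {p : Fin c → ℝ} (hp1 : ∑ k, p k = 1) {j : Fin c}
    (hm : π1 + (1 - π1) * p j ≠ 0) :
    klDiv p (fun k => π1 * oneHot j k + (1 - π1) * p k)
      = p j * log (p j) - p j * log (π1 + (1 - π1) * p j) - (1 - p j) * log (1 - π1) := by
  have hrest : ∑ k ∈ {j}ᶜ, p k = 1 - p j := by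
    rw [← hp1, Fintype.sum_eq_add_sum_compl j p, add_sub_cancel_left]
  have hj : p j * log (p j / (π1 + (1 - π1) * p j))
      = p j * log (p j) - p j * log (π1 + (1 - π1) * p j) := by
    rcases eq_or_ne (p j) 0 with h | h
    · simp [h]
    · rw [log_div h hm]
      ring
  rw [klDiv, Fintype.sum_eq_add_sum_compl j, oneHot_self, mul_one, hj, sum_congr rfl fun k hk => by
    rw [oneHot_of_ne (by simpa using hk), mul_zero, zero_add,
      mul_log_div_mul_self], sum_neg_distrib, ← sum_mul, hrest]
  ring

lemma jsLoss_eq_jsPhi {p : Fin c → ℝ} (hp : p ∈ stdSimplex ℝ (Fin c)) (h0 : 0 < π1)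
    (h1 : π1 ≤ 1) (j : Fin c) :
    jsLoss p j π1 = (jsPhi π1 (p j) - (1 - π1) * (1 - p j) * log (1 - π1))
      / (-(1 - π1) * log (1 - π1)) := by
  have hm : 0 < π1 + (1 - π1) * p j := by nlinarith [hp.1 j]
  rw [jsLoss, klDiv_oneHot_left, oneHot_self, mul_one, klDiv_mix_oneHot hp.2 hm.ne', jsPhi]
  ring

lemma sum_jsLoss_eq {p : Fin c → ℝ} (hp : p ∈ stdSimplex ℝ (Fin c)) (h0 : 0 < π1)
    (h1 : π1 ≤ 1) :
    ∑ i, jsLoss p i π1 = (∑ i, jsPhi π1 (p i) - (1 - π1) * (c - 1) * log (1 - π1))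
      / (-(1 - π1) * log (1 - π1)) := by
  simp only [jsLoss_eq_jsPhi hp h0 h1, ← sum_div, sum_sub_distrib, ← sum_mul, ← mul_sum,
    hp.2, sum_const, card_univ, Fintype.card_fin, nsmul_eq_mul, mul_one]

lemma sum_jsLoss_le_sum_jsLoss {p q : Fin c → ℝ} (hp : p ∈ stdSimplex ℝ (Fin c))
    (hq : q ∈ stdSimplex ℝ (Fin c)) (h0 : 0 < π1) (h1 : π1 ≤ 1)
    (hpq : ∑ i, jsPhi π1 (p i) ≤ ∑ i, jsPhi π1 (q i)) :
    ∑ i, jsLoss p i π1 ≤ ∑ i, jsLoss q i π1 := by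
  have hZ : 0 ≤ -(1 - π1) * log (1 - π1) := by
    have := log_nonpos (sub_nonneg.mpr h1) (by linarith)
    nlinarith
  rw [sum_jsLoss_eq hp h0 h1, sum_jsLoss_eq hq h0 h1]
  gcongr

end JSLoss

/-- Fix `π1 ∈ (0,1)`. For every `p` in the probability simplex, the sum of
the JS losses over all class labels satisfies
`Σ_i L_JS(u, e_i; π1) ≤ Σ_i L_JS(p, e_i; π1) ≤ Σ_i L_JS(e_1, e_i; π1)`,
where `u = (1/c, …, 1/c)` is the uniform distribution; i.e., the JS loss is bounded
with `C_L = Σ_i L_JS(u, e_i; π1)` and `C_U = Σ_i L_JS(e_1, e_i; π1)`. -/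
theorem js_bounded (c : ℕ) (hc : 2 ≤ c) (π1 : ℝ) (hπ0 : 0 < π1) (hπ1 : π1 < 1)
    (p : Fin c → ℝ) (hp0 : ∀ i, 0 ≤ p i) (hp1 : ∑ i, p i = 1) :
    ∑ i, jsLoss (fun _ : Fin c => ((c : ℝ))⁻¹) i π1 ≤ ∑ i, jsLoss p i π1 ∧
      ∑ i, jsLoss p i π1 ≤ ∑ i, jsLoss (oneHot (⟨0, by omega⟩ : Fin c)) i π1 := by
  have hp : p ∈ stdSimplex ℝ (Fin c) := ⟨hp0, hp1⟩
  have : Nonempty (Fin c) := ⟨⟨0, by omega⟩⟩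
  have hu : (fun _ : Fin c => (Fintype.card (Fin c) : ℝ)⁻¹) ∈ stdSimplex ℝ (Fin c) :=
    stdSimplex.barycenter.2
  rw [Fintype.card_fin] at hu
  have hφ : ConvexOn ℝ (Set.Icc 0 1) (jsPhi π1) :=
    (jsPhi_convexOn hπ0 hπ1.le).subset Set.Icc_subset_Ici_self (convex_Icc 0 1)
  constructor
  · refine sum_jsLoss_le_sum_jsLoss hu hp hπ0 hπ1.le ?_
    simpa using hφ.sum_const_inv_card_le_sum hp
  · rw [oneHot_eq_single]
    exact sum_jsLoss_le_sum_jsLoss hp (single_mem_stdSimplex ℝ _) hπ0 hπ1.le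
      (hφ.sum_le_sum_single hp _)
end

section
/- Let p ∈ Δ with all components positive, let j be an index such that p_i < p_j for all i ≠ j (i.e., class j has positive margin), and let q : {1, …, c} → (0, 1] assign an instance-dependent GCE hyperparameter to each class. Writing q_min = min_{i ≠ j} q_i and q_max = max_{i ≠ j} q_i, the sum of the instance-dependent GCE losses over all class labels satisfies (c − 1 − (c−1)^{1−q_min}·(1 − p_j)^{q_min})/q_max + (1 − p_j^{q_j})/q_j ≤ Σ_{i=1}^c (1 − p_i^{q_i})/q_i ≤ (c − 2 + p_j)/q_min + (1 − p_j^{q_j})/q_j. -/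
/-!
Split the sum into the term of class `j` and the `c - 1` terms of the other classes. For
`x ∈ [0, 1]` the loss `(1 - x ^ q) / q` is monotone in the exponent in both places it appears,
so each term with `i ≠ j` lies between `(1 - p i ^ qmin) / qmax` and `(1 - p i) / qmin`.
Summing, the upper bound uses `∑_{i ≠ j} p i = 1 - p j`; the lower bound additionally needs the
concavity of `x ↦ x ^ qmin`, in the form
`∑_{i ≠ j} p i ^ qmin ≤ (c - 1) ^ (1 - qmin) (1 - p j) ^ qmin`
(Hölder's inequality against the constant weight `1`).
-/

open Finset

lemma sum_rpow_le_card_rpow_mul_rpow_sum {ι : Type*} (s : Finset ι) {r : ℝ} (hr0 : 0 < r)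
    (hr1 : r ≤ 1) (x : ι → ℝ) (hx : ∀ i, 0 ≤ x i) :
    ∑ i ∈ s, x i ^ r ≤ (#s : ℝ) ^ (1 - r) * (∑ i ∈ s, x i) ^ r := by
  have holder := Real.inner_le_weight_mul_Lp_of_nonneg s (one_le_inv_iff₀.mpr ⟨hr0, hr1⟩)
    (fun _ ↦ 1) (fun i ↦ x i ^ r) (fun _ ↦ zero_le_one) (fun i ↦ Real.rpow_nonneg (hx i) r)
  have hcancel : ∀ i, (x i ^ r) ^ r⁻¹ = x i := fun i ↦
    Real.rpow_rpow_inv (hx i) hr0.ne'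
  simpa only [one_mul, sum_const, nsmul_eq_mul, mul_one, hcancel, inv_inv] using holder

lemma one_sub_rpow_div_le_one_sub_rpow_div {x a q b : ℝ} (hx0 : 0 ≤ x) (hx1 : x ≤ 1)
    (ha : 0 ≤ a) (haq : a ≤ q) (hq : 0 < q) (hqb : q ≤ b) :
    (1 - x ^ a) / b ≤ (1 - x ^ q) / q :=
  div_le_div₀ (by linarith [Real.rpow_le_one hx0 hx1 hq.le])
    (by linarith [Real.rpow_le_rpow_of_exponent_ge' hx0 hx1 ha haq]) hq hqb

lemma one_sub_rpow_div_le_one_sub_div {x q a : ℝ} (hx0 : 0 ≤ x) (hx1 : x ≤ 1)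
    (ha : 0 < a) (haq : a ≤ q) (hq1 : q ≤ 1) :
    (1 - x ^ q) / q ≤ (1 - x) / a :=
  div_le_div₀ (by linarith) (by linarith [Real.self_le_rpow_of_le_one hx0 hx1 hq1]) ha haq

section SumBounds

variable {ι : Type*} (s : Finset ι) (x q : ι → ℝ)

lemma sum_one_sub_rpow_div_le {a : ℝ} (ha : 0 < a) (hx0 : ∀ i ∈ s, 0 ≤ x i)
    (hx1 : ∀ i ∈ s, x i ≤ 1) (haq : ∀ i ∈ s, a ≤ q i) (hq1 : ∀ i ∈ s, q i ≤ 1) :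
    ∑ i ∈ s, (1 - x i ^ q i) / q i ≤ (#s - ∑ i ∈ s, x i) / a := calc
  ∑ i ∈ s, (1 - x i ^ q i) / q i ≤ ∑ i ∈ s, (1 - x i) / a := sum_le_sum fun i hi ↦
    one_sub_rpow_div_le_one_sub_div (hx0 i hi) (hx1 i hi) ha (haq i hi) (hq1 i hi)
  _ = (#s - ∑ i ∈ s, x i) / a := by
    rw [← sum_div, sum_sub_distrib, sum_const, nsmul_one]

lemma le_sum_one_sub_rpow_div {a b : ℝ} (ha0 : 0 < a) (ha1 : a ≤ 1) (hb : 0 ≤ b)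
    (hx0 : ∀ i, 0 ≤ x i) (hx1 : ∀ i ∈ s, x i ≤ 1) (haq : ∀ i ∈ s, a ≤ q i)
    (hqb : ∀ i ∈ s, q i ≤ b) :
    (#s - (#s : ℝ) ^ (1 - a) * (∑ i ∈ s, x i) ^ a) / b ≤ ∑ i ∈ s, (1 - x i ^ q i) / q i := calc
  (#s - (#s : ℝ) ^ (1 - a) * (∑ i ∈ s, x i) ^ a) / b ≤ (#s - ∑ i ∈ s, x i ^ a) / b := by
    gcongr
    exact sum_rpow_le_card_rpow_mul_rpow_sum s ha0 ha1 x hx0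
  _ = ∑ i ∈ s, (1 - x i ^ a) / b := by
    rw [← sum_div, sum_sub_distrib, sum_const, nsmul_one]
  _ ≤ ∑ i ∈ s, (1 - x i ^ q i) / q i := sum_le_sum fun i hi ↦
    one_sub_rpow_div_le_one_sub_rpow_div (hx0 i) (hx1 i hi) ha0.le (haq i hi)
      (ha0.trans_le (haq i hi)) (hqb i hi)

end SumBounds

lemma sum_one_sub_rpow_div_bounds {ι : Type*} [Fintype ι] [DecidableEq ι] (p q : ι → ℝ) (j : ι)
    (hp0 : ∀ i, 0 ≤ p i) (hp1 : ∑ i, p i = 1) {a b : ℝ} (ha0 : 0 < a) (ha1 : a ≤ 1) (hb : 0 ≤ b)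
    (haq : ∀ i, i ≠ j → a ≤ q i) (hqb : ∀ i, i ≠ j → q i ≤ b) (hq1 : ∀ i, i ≠ j → q i ≤ 1) :
    ((Fintype.card ι : ℝ) - 1 - ((Fintype.card ι : ℝ) - 1) ^ (1 - a) * (1 - p j) ^ a) / b
        + (1 - p j ^ q j) / q j ≤ ∑ i, (1 - p i ^ q i) / q i ∧
      ∑ i, (1 - p i ^ q i) / q i
        ≤ ((Fintype.card ι : ℝ) - 2 + p j) / a + (1 - p j ^ q j) / q j := by
  have hcard : (#(univ.erase j) : ℝ) = Fintype.card ι - 1 := by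
    rw [card_erase_of_mem (mem_univ j), card_univ, Nat.cast_pred (Fintype.card_pos_iff.mpr ⟨j⟩)]
  have hsum_p : ∑ i ∈ univ.erase j, p i = 1 - p j := by
    rw [← hp1, ← sum_erase_add _ _ (mem_univ j), add_sub_cancel_right]
  have hp_le : ∀ i ∈ univ.erase j, p i ≤ 1 := fun i _ ↦
    hp1 ▸ single_le_sum (fun k _ ↦ hp0 k) (mem_univ i)
  have hne : ∀ i ∈ univ.erase j, i ≠ j := fun _ ↦ ne_of_mem_erase
  rw [← sum_erase_add _ _ (mem_univ j)]
  constructor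
  · have := le_sum_one_sub_rpow_div (univ.erase j) p q ha0 ha1 hb hp0 hp_le
      (fun i hi ↦ haq i (hne i hi)) (fun i hi ↦ hqb i (hne i hi))
    rw [hcard, hsum_p] at this
    gcongr
  · have := sum_one_sub_rpow_div_le (univ.erase j) p q ha0 (fun i _ ↦ hp0 i) hp_le
      (fun i hi ↦ haq i (hne i hi)) (fun i hi ↦ hq1 i (hne i hi))
    rw [hcard, hsum_p, show (Fintype.card ι : ℝ) - 1 - (1 - p j) = Fintype.card ι - 2 + p j by
      ring] at this
    gcongr

theorem instance_dependent_gce_bounded_general (c : ℕ) (hc : 2 ≤ c)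
    (p : Fin c → ℝ) (hp0 : ∀ i, 0 < p i) (hp1 : ∑ i, p i = 1)
    (j : Fin c)
    (q : Fin c → ℝ) (hq0 : ∀ i, 0 < q i) (hq1 : ∀ i, q i ≤ 1)
    (qmin qmax : ℝ)
    (hqmin : qmin = ⨅ i : {i : Fin c // i ≠ j}, q (i : Fin c))
    (hqmax : qmax = ⨆ i : {i : Fin c // i ≠ j}, q (i : Fin c)) :
    ((c : ℝ) - 1 - ((c : ℝ) - 1) ^ (1 - qmin) * (1 - p j) ^ qmin) / qmax
        + (1 - p j ^ q j) / q j ≤ ∑ i, (1 - p i ^ q i) / q i ∧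
      ∑ i, (1 - p i ^ q i) / q i
        ≤ ((c : ℝ) - 2 + p j) / qmin + (1 - p j ^ q j) / q j := by
  have : Nontrivial (Fin c) := Fin.nontrivial_iff_two_le.mpr hc
  obtain ⟨i₀, hi₀⟩ := exists_ne j
  have : Nonempty {i : Fin c // i ≠ j} := ⟨⟨i₀, hi₀⟩⟩
  have hbdd := Set.finite_range fun i : {i : Fin c // i ≠ j} ↦ q i
  have hqmin_le : ∀ i, i ≠ j → qmin ≤ q i := fun i hi ↦ hqmin ▸ ciInf_le hbdd.bddBelow ⟨i, hi⟩
  have hle_qmax : ∀ i, i ≠ j → q i ≤ qmax := fun i hi ↦ hqmax ▸ le_ciSup hbdd.bddAbove ⟨i, hi⟩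
  obtain ⟨i₁, hi₁⟩ := exists_eq_ciInf_of_finite (f := fun i : {i : Fin c // i ≠ j} ↦ q i)
  have hqmin_pos : 0 < qmin := hqmin ▸ hi₁ ▸ hq0 i₁
  have hqmin_le_one : qmin ≤ 1 := hqmin ▸ hi₁ ▸ hq1 i₁
  have hqmax_nonneg : 0 ≤ qmax := (hq0 i₀).le.trans (hle_qmax i₀ hi₀)
  simpa only [Fintype.card_fin] using sum_one_sub_rpow_div_bounds p q j (fun i ↦ (hp0 i).le) hp1
    hqmin_pos hqmin_le_one hqmax_nonneg hqmin_le hle_qmax (fun i _ ↦ hq1 i)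

/-- Pro. 2 of the paper: Let `p` be in the probability simplex with all
components positive, let `j` be an index such that `p_i < p_j` for all `i ≠ j` (class `j`
has positive margin), and let `q : {1,…,c} → (0,1]` assign an instance-dependent GCE
hyperparameter to each class. With `q_min = min_{i ≠ j} q_i` and `q_max = max_{i ≠ j} q_i`,
the sum of the instance-dependent GCE losses over all class labels satisfies
`(c − 1 − (c−1)^{1−q_min}·(1 − p_j)^{q_min})/q_max + (1 − p_j^{q_j})/q_j
  ≤ Σ_i (1 − p_i^{q_i})/q_i ≤ (c − 2 + p_j)/q_min + (1 − p_j^{q_j})/q_j`. -/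
theorem instance_dependent_gce_bounded (c : ℕ) (hc : 2 ≤ c)
    (p : Fin c → ℝ) (hp0 : ∀ i, 0 < p i) (hp1 : ∑ i, p i = 1)
    (j : Fin c) (hj : ∀ i, i ≠ j → p i < p j)
    (q : Fin c → ℝ) (hq0 : ∀ i, 0 < q i) (hq1 : ∀ i, q i ≤ 1)
    (qmin qmax : ℝ)
    (hqmin : qmin = ⨅ i : {i : Fin c // i ≠ j}, q (i : Fin c))
    (hqmax : qmax = ⨆ i : {i : Fin c // i ≠ j}, q (i : Fin c)) :
    ((c : ℝ) - 1 - ((c : ℝ) - 1) ^ (1 - qmin) * (1 - p j) ^ qmin) / qmax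
        + (1 - p j ^ q j) / q j ≤ ∑ i, (1 - p i ^ q i) / q i ∧
      ∑ i, (1 - p i ^ q i) / q i
        ≤ ((c : ℝ) - 2 + p j) / qmin + (1 - p j ^ q j) / q j :=
  instance_dependent_gce_bounded_general c hc p hp0 hp1 j q hq0 hq1 qmin qmax hqmin hqmax
end

section
/- Let p ∈ Δ and let j be an index with p_j = max_i p_i and p_j > 0. Then the sum of the noise-aware GCE losses over all class labels, namely Σ_{i ≠ j} (1 − p_i) + (−log p_j) (GCE with q = 1 on the classes with negative margin and the cross-entropy limit q → 0 on the argmax class), satisfies c − 1 ≤ Σ_{i ≠ j} (1 − p_i) − log p_j ≤ c − 2 + 1/c + log c; i.e., the noise-aware GCE loss is bounded with C_L = c − 1 and C_U = c − 2 + 1/c + log c. -/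
/-- Let `p` be in the probability simplex and `j` an index with
`p_j = max_i p_i` and `p_j > 0`. The sum of the noise-aware GCE losses over all class
labels — GCE with `q = 1` (i.e. `1 − p_i`) on the classes `i ≠ j` (negative margin) and
the cross-entropy limit `q → 0` (i.e. `−log p_j`) on the argmax class — satisfies
`c − 1 ≤ Σ_{i ≠ j} (1 − p_i) − log p_j ≤ c − 2 + 1/c + log c`;
i.e., the noise-aware GCE loss is bounded with `C_L = c − 1` and
`C_U = c − 2 + 1/c + log c`. -/
theorem noise_aware_gce_bounded (c : ℕ) (hc : 2 ≤ c)
    (p : Fin c → ℝ) (hp0 : ∀ i, 0 ≤ p i) (hp1 : ∑ i, p i = 1)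
    (j : Fin c) (hjmax : ∀ i, p i ≤ p j) (hpj : 0 < p j) :
    (c : ℝ) - 1 ≤ (∑ i ∈ Finset.univ.erase j, (1 - p i)) + -Real.log (p j) ∧
      (∑ i ∈ Finset.univ.erase j, (1 - p i)) + -Real.log (p j)
        ≤ (c : ℝ) - 2 + 1 / (c : ℝ) + Real.log c := by
  have hc0 : (0:ℝ) < c := by positivity
  have hsum : ∑ i ∈ Finset.univ.erase j, p i = 1 - p j := by
    rw [← Finset.add_sum_erase _ _ (Finset.mem_univ j)] at hp1
    linarith
  have hS : ∑ i ∈ Finset.univ.erase j, (1 - p i) = (c : ℝ) - 2 + p j := by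
    rw [Finset.sum_sub_distrib, hsum, Finset.sum_const,
      Finset.card_erase_of_mem (Finset.mem_univ j), Finset.card_univ, Fintype.card_fin,
      nsmul_eq_mul, mul_one, Nat.cast_sub (by omega : 1 ≤ c)]
    push_cast
    ring
  rw [hS]
  -- p j ≥ 1/c since it's the max
  have hpj1c : 1 / (c : ℝ) ≤ p j := by
    have : (1:ℝ) ≤ c * p j := by
      calc (1:ℝ) = ∑ i, p i := hp1.symm
        _ ≤ ∑ _i : Fin c, p j := Finset.sum_le_sum fun i _ => hjmax i
        _ = c * p j := by simp [mul_comm]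
    rw [div_le_iff₀ hc0]
    linarith [this]
  have hpj1 : p j ≤ 1 := by
    have := hsum
    have hnn : 0 ≤ ∑ i ∈ Finset.univ.erase j, p i :=
      Finset.sum_nonneg fun i _ => hp0 i
    linarith
  constructor
  · -- need 1 ≤ p j - log (p j), i.e. log (p j) ≤ p j - 1
    have := Real.log_le_sub_one_of_pos hpj
    linarith
  · -- need p j - log (p j) ≤ 1/c + log c
    -- log (p j) ≥ 1 - 1/(p j)  ... but better: log(c * p j) ≥ 1 - 1/(c p j)
    have ht : (0:ℝ) < c * p j := by positivity
    have hlog : Real.log (1 / (c * p j)) ≤ 1 / (c * p j) - 1 :=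
      Real.log_le_sub_one_of_pos (by positivity)
    rw [Real.log_div one_ne_zero (ne_of_gt ht), Real.log_one,
      Real.log_mul (ne_of_gt hc0) (ne_of_gt hpj)] at hlog
    -- hlog : -(log c + log (p j)) ≤ 1/(c * p j) - 1
    have ht1 : (1:ℝ) ≤ c * p j := by
      have := hpj1c
      rw [div_le_iff₀ hc0] at this
      linarith
    have hinv : 1 / ((c:ℝ) * p j) ≤ 1 := by
      rw [div_le_one ht]; exact ht1
    -- so log c + log (p j) ≥ 1 - 1/(c p j) ≥ 1 - ... need (c p j - 1)/c ≤ log(c p j)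
    -- Goal: p j - log (p j) ≤ 1/c + log c
    -- i.e. p j - 1/c ≤ log (p j) + log c
    -- we have log (p j) + log c ≥ 1 - 1/(c p j) = (c p j - 1)/(c p j)
    -- and p j - 1/c = (c p j - 1)/c, and c p j ≤ c so (c p j -1)/c ≤ (c p j -1)/(c p j)
    have hcpjc : (c:ℝ) * p j ≤ c := by nlinarith
    have key : p j - 1 / c ≤ 1 - 1 / ((c:ℝ) * p j) := by
      rw [sub_le_sub_iff]
      have h1 : p j + 1 / ((c:ℝ) * p j) = (c * p j * p j + 1) / (c * p j) := by
        field_simp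
      have h2 : (1:ℝ) + 1 / c = (c * p j + p j) / (c * p j) := by
        field_simp
      rw [h1, h2, div_le_div_iff₀ ht ht]
      nlinarith [mul_nonneg (mul_nonneg (sub_nonneg.mpr ht1) (sub_nonneg.mpr hpj1)) ht.le]
    linarith
end

section
/- Let p ∈ Δ and let j be an index with p_j = max_i p_i and p_j > 0. Define the noise-aware JS loss of p against label i as 1 − p_i (the π1 → 1 limit of the JS loss, equal to half the MAE loss) for every i ≠ j, and as −log p_j (the π1 → 0 limit of the JS loss, equal to the cross-entropy loss) for i = j. Then the sum over all class labels satisfies c − 1 ≤ Σ_{i ≠ j} (1 − p_i) + (−log p_j) ≤ c − 2 + 1/c + log c; i.e., the noise-aware JS loss is bounded with C_L = c − 1 and C_U = c − 2 + 1/c + log c. -/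
/-- Let `p` be in the probability simplex and `j` an index with
`p_j = max_i p_i` and `p_j > 0`. Define the noise-aware JS loss of `p` against label `i`
as `1 − p_i` (the `π1 → 1` limit of the JS loss, half the MAE loss) for every `i ≠ j`,
and as `−log p_j` (the `π1 → 0` limit of the JS loss, the cross-entropy loss) for
`i = j`. Then the sum over all class labels satisfies
`c − 1 ≤ Σ_{i ≠ j} (1 − p_i) + (−log p_j) ≤ c − 2 + 1/c + log c`;
i.e., the noise-aware JS loss is bounded with `C_L = c − 1` and
`C_U = c − 2 + 1/c + log c`. -/
theorem noise_aware_js_bounded (c : ℕ) (hc : 2 ≤ c)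
    (p : Fin c → ℝ) (hp0 : ∀ i, 0 ≤ p i) (hp1 : ∑ i, p i = 1)
    (j : Fin c) (hjmax : ∀ i, p i ≤ p j) (hpj : 0 < p j) :
    (c : ℝ) - 1 ≤ (∑ i ∈ Finset.univ.erase j, (1 - p i)) + -Real.log (p j) ∧
      (∑ i ∈ Finset.univ.erase j, (1 - p i)) + -Real.log (p j)
        ≤ (c : ℝ) - 2 + 1 / (c : ℝ) + Real.log c := by
  have hcpos : (0:ℝ) < c := by positivity
  have herase : ∑ i ∈ Finset.univ.erase j, p i = 1 - p j := by
    have := Finset.add_sum_erase Finset.univ p (Finset.mem_univ j)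
    linarith [hp1 ▸ this]
  have hcard : (Finset.univ.erase j).card = c - 1 := by
    simp [Finset.card_erase_of_mem]
  have hsum : ∑ i ∈ Finset.univ.erase j, (1 - p i) = (c:ℝ) - 2 + p j := by
    rw [Finset.sum_sub_distrib, herase, Finset.sum_const, hcard, nsmul_eq_mul]
    have : ((c - 1 : ℕ) : ℝ) = (c:ℝ) - 1 := by
      have : (1:ℕ) ≤ c := by omega
      push_cast [this]; ring
    rw [this]; ring
  have hpj1 : p j ≤ 1 := by
    have : p j + ∑ i ∈ Finset.univ.erase j, p i = 1 := by
      rw [herase]; ring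
    have hnn : 0 ≤ ∑ i ∈ Finset.univ.erase j, p i :=
      Finset.sum_nonneg fun i _ => hp0 i
    linarith
  have hpjc : 1 / (c:ℝ) ≤ p j := by
    have h1 : (1:ℝ) = ∑ i, p i := hp1.symm
    have h2 : ∑ i, p i ≤ ∑ _i : Fin c, p j :=
      Finset.sum_le_sum fun i _ => hjmax i
    have h3 : ∑ _i : Fin c, p j = (c:ℝ) * p j := by
      simp [Finset.sum_const, mul_comm]
    rw [div_le_iff₀ hcpos]
    nlinarith
  constructor
  · have hlog : Real.log (p j) ≤ p j - 1 := Real.log_le_sub_one_of_pos hpj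
    rw [hsum]; linarith
  · -- need p j - log (p j) ≤ 1/c + log c
    rw [hsum]
    have ht : 0 < (c:ℝ) * p j := by positivity
    have hlog : Real.log ((c:ℝ) * p j) ≥ 1 - 1 / ((c:ℝ) * p j) := by
      have := Real.log_le_sub_one_of_pos (x := 1 / ((c:ℝ) * p j)) (by positivity)
      rw [Real.log_div one_ne_zero (ne_of_gt ht), Real.log_one] at this
      linarith
    have hsplit : Real.log ((c:ℝ) * p j) = Real.log c + Real.log (p j) := by
      rw [Real.log_mul (ne_of_gt hcpos) (ne_of_gt hpj)]
    have hcp1 : 1 ≤ (c:ℝ) * p j := by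
      have h2 : (1:ℝ) / c * c = 1 := by field_simp
      nlinarith [hpjc]
    have key : p j - 1 / (c:ℝ) ≤ 1 - 1 / ((c:ℝ) * p j) := by
      have h : 1 / ((c:ℝ) * p j) - 1 / (c:ℝ) = (1 - p j) / ((c:ℝ) * p j) := by
        field_simp
      have h2 : (1 - p j) / ((c:ℝ) * p j) ≤ 1 - p j :=
        div_le_self (by linarith) hcp1
      linarith
    have : p j - Real.log (p j) ≤ 1 / (c:ℝ) + Real.log c := by
      nlinarith [hlog, hsplit ▸ hlog]
    linarith
end

section
/- For every p ∈ Δ and every label j with p_j > 0, the JS loss converges to the cross-entropy loss as π1 → 0 from the right: lim_{π1 → 0^+} L_JS(p, e_j; π1) = −log p_j. -/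
/-
Write `Z(π1) · L_JS = N(π1) := π1·D(e_j ‖ m) + π2·D(p ‖ m)`. Both `N` and
`Z(π1) = -(1 - π1)·log(1 - π1)` vanish at `π1 = 0`, where `Z' = 1` and `N' = -log p_j`: the
term `π1·D(e_j ‖ m) = -π1·log m_j` contributes `-log p_j`, while `π2·D(p ‖ m)` contributes
nothing because `D(p ‖ ·)` is minimal at `m = p`. Hence `L_JS = N / Z → N'(0) / Z'(0)`.
-/

open Filter Topology

theorem tendsto_div_nhdsNE_of_hasDerivAt {𝕜 : Type*} [NontriviallyNormedField 𝕜]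
    {f g : 𝕜 → 𝕜} {a f' g' : 𝕜} (hf : HasDerivAt f f' a) (hg : HasDerivAt g g' a)
    (hfa : f a = 0) (hga : g a = 0) (hg' : g' ≠ 0) :
    Tendsto (fun x => f x / g x) (𝓝[≠] a) (𝓝 (f' / g')) := by
  refine ((hasDerivAt_iff_tendsto_slope.mp hf).div (hasDerivAt_iff_tendsto_slope.mp hg)
    hg').congr' ?_
  filter_upwards [self_mem_nhdsWithin] with x hx
  rw [Pi.div_apply, slope_def_field, slope_def_field, hfa, hga, sub_zero, sub_zero,
    div_div_div_cancel_right₀ (sub_ne_zero.mpr hx)]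

theorem hasDerivAt_log_one_sub : HasDerivAt (fun t : ℝ => Real.log (1 - t)) (-1) 0 := by
  simpa using ((hasDerivAt_id' (0 : ℝ)).const_sub 1).log (by norm_num)

theorem hasDerivAt_neg_one_sub_mul_log_one_sub :
    HasDerivAt (fun t : ℝ => -(1 - t) * Real.log (1 - t)) 1 0 := by
  simpa using ((hasDerivAt_id' (0 : ℝ)).const_sub 1).fun_neg.fun_mul hasDerivAt_log_one_sub

theorem hasDerivAt_log_mixture {q : ℝ} (hq : q ≠ 0) :
    HasDerivAt (fun t : ℝ => Real.log (t + (1 - t) * q)) ((1 - q) / q) 0 := by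
  have hm : HasDerivAt (fun t : ℝ => t + (1 - t) * q) (1 - q) 0 := by
    simpa [sub_eq_add_neg] using
      (hasDerivAt_id' (0 : ℝ)).fun_add (((hasDerivAt_id' 0).const_sub 1).mul_const q)
  simpa [div_eq_inv_mul] using hm.log (by simpa using hq)

section Mixture

variable {c : ℕ} (p : Fin c → ℝ) (j : Fin c)

theorem klDiv_oneHot_mixture (t : ℝ) :
    klDiv (oneHot j) (fun k => t * oneHot j k + (1 - t) * p k)
      = -Real.log (t + (1 - t) * p j) := by
  rw [klDiv, Finset.sum_eq_single j (fun k _ hk => by simp [oneHot, hk]) (by simp)]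
  simp [oneHot, Real.log_inv]

theorem klDiv_mixture (hp1 : ∑ i, p i = 1) (hpj : p j ≠ 0) {t : ℝ} (ht : t ≠ 1)
    (hm : t + (1 - t) * p j ≠ 0) :
    klDiv p (fun k => t * oneHot j k + (1 - t) * p k)
      = -Real.log (1 - t)
        + p j * (Real.log (p j) - Real.log (t + (1 - t) * p j) + Real.log (1 - t)) := by
  have h1t : 1 - t ≠ 0 := sub_ne_zero.mpr ht.symm
  have hterm : ∀ k, p k * Real.log (p k / (t * oneHot j k + (1 - t) * p k))
      = p k * -Real.log (1 - t) + if k = j then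
          p j * (Real.log (p j) - Real.log (t + (1 - t) * p j) + Real.log (1 - t)) else 0 := by
    intro k
    by_cases hk : k = j
    · subst hk
      simp only [oneHot, if_true, mul_one, Real.log_div hpj hm]
      ring
    · by_cases hk0 : p k = 0
      · simp [hk0, hk]
      · have : p k / ((1 - t) * p k) = (1 - t)⁻¹ := by field_simp
        simp [oneHot, hk, this, Real.log_inv]
  rw [klDiv, Finset.sum_congr rfl fun k _ => hterm k, Finset.sum_add_distrib, ← Finset.sum_mul,
    hp1, Finset.sum_ite_eq']
  simp

noncomputable def jsNumerator (t : ℝ) : ℝ :=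
  t * klDiv (oneHot j) (fun k => t * oneHot j k + (1 - t) * p k)
    + (1 - t) * klDiv p (fun k => t * oneHot j k + (1 - t) * p k)

theorem jsLoss_eq_jsNumerator_div (t : ℝ) :
    jsLoss p j t = jsNumerator p j t / (-(1 - t) * Real.log (1 - t)) := rfl

variable (hp1 : ∑ i, p i = 1) (hpj : p j ≠ 0)
include hp1 hpj

theorem jsNumerator_eventuallyEq :
    jsNumerator p j =ᶠ[𝓝 0] fun t => t * -Real.log (t + (1 - t) * p j)
      + (1 - t) * (-Real.log (1 - t)
        + p j * (Real.log (p j) - Real.log (t + (1 - t) * p j) + Real.log (1 - t))) := by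
  have hm : ∀ᶠ t in 𝓝 (0 : ℝ), t + (1 - t) * p j ≠ 0 :=
    (by fun_prop : Continuous fun t : ℝ => t + (1 - t) * p j).continuousAt.eventually_ne
      (by simpa using hpj)
  filter_upwards [hm, eventually_ne_nhds (zero_ne_one' ℝ)] with t hmt ht
  rw [jsNumerator, klDiv_oneHot_mixture, klDiv_mixture p j hp1 hpj ht hmt]

theorem jsNumerator_zero : jsNumerator p j 0 = 0 := by
  simp [(jsNumerator_eventuallyEq p j hp1 hpj).eq_of_nhds]

theorem hasDerivAt_jsNumerator : HasDerivAt (jsNumerator p j) (-Real.log (p j)) 0 := by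
  have hlogm := hasDerivAt_log_mixture hpj
  refine HasDerivAt.congr_of_eventuallyEq ?_ (jsNumerator_eventuallyEq p j hp1 hpj)
  convert (hasDerivAt_id' 0).fun_mul hlogm.fun_neg |>.fun_add
    (((hasDerivAt_id' 0).const_sub 1).fun_mul
      (hasDerivAt_log_one_sub.fun_neg.fun_add
        (((hlogm.const_sub _).fun_add hasDerivAt_log_one_sub).const_mul (p j)))) using 1
  field_simp
  simp only [sub_zero, one_mul, zero_add, zero_mul, neg_zero, add_zero, Real.log_one, sub_self,
    mul_zero, neg_sub]
  ring

end Mixture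

theorem jsLoss_tendsto_crossEntropy_general (c : ℕ)
    (p : Fin c → ℝ) (hp1 : ∑ i, p i = 1)
    (j : Fin c) (hpj : 0 < p j) :
    Filter.Tendsto (fun π1 : ℝ => jsLoss p j π1) (nhdsWithin 0 (Set.Ioi 0))
      (nhds (-Real.log (p j))) := by
  have hratio := tendsto_div_nhdsNE_of_hasDerivAt (hasDerivAt_jsNumerator p j hp1 hpj.ne')
    hasDerivAt_neg_one_sub_mul_log_one_sub (jsNumerator_zero p j hp1 hpj.ne') (by simp)
    one_ne_zero
  rw [div_one] at hratio
  exact (hratio.mono_left (nhdsGT_le_nhdsNE 0)).congr fun t =>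
    (jsLoss_eq_jsNumerator_div p j t).symm

/-- For every `p` in the probability simplex and every label `j` with
`p_j > 0`, the JS loss converges to the cross-entropy loss as `π1 → 0` from the right:
`lim_{π1 → 0^+} L_JS(p, e_j; π1) = −log p_j`. -/
theorem jsLoss_tendsto_crossEntropy (c : ℕ) (hc : 2 ≤ c)
    (p : Fin c → ℝ) (hp0 : ∀ i, 0 ≤ p i) (hp1 : ∑ i, p i = 1)
    (j : Fin c) (hpj : 0 < p j) :
    Filter.Tendsto (fun π1 : ℝ => jsLoss p j π1) (nhdsWithin 0 (Set.Ioi 0))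
      (nhds (-Real.log (p j))) :=
  jsLoss_tendsto_crossEntropy_general c p hp1 j hpj
end
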